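/- Let X be a compact metrizable topological space and f : X → X an R-closed homeomorphism. Then for every positive integer n the iterate f^n is pointwise almost periodic; that is, the relation x ~ y defined by y ∈ closure(O_{f^n}(x)) is an equivalence relation on X (equivalently, the closures of the f^n-orbits form a partition of X). -/
import Mathlib


/-- The `ℤ`-orbit of a point `x` under a bijection `g` : `O_g(x) = {gᵏ x : k ∈ ℤ}`. -/
def zOrbit {X : Type*} (g : Equiv.Perm X) (x : X) : Set X :=
  Set.range fun k : ℤ => (g ^ k) x

/-- A map is R-closed if the relation `R = {(x,y) : y ∈ closure (O(x))}` is closed. -/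
def RClosed {X : Type*} [TopologicalSpace X] (g : Equiv.Perm X) : Prop :=
  IsClosed {p : X × X | p.2 ∈ closure (zOrbit g p.1)}

namespace RCAux

open Set

variable {X : Type*}

lemma mem_zOrbit_self (g : Equiv.Perm X) (x : X) : x ∈ zOrbit g x :=
  ⟨0, by simp⟩

lemma zpow_apply_mem_zOrbit (g : Equiv.Perm X) (x : X) (k : ℤ) :
    (g ^ k) x ∈ zOrbit g x := ⟨k, rfl⟩

lemma zOrbit_zpow_apply (g : Equiv.Perm X) (x : X) (k : ℤ) :
    zOrbit g ((g ^ k) x) = zOrbit g x := by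
  ext y
  constructor <;> rintro ⟨m, rfl⟩
  · exact ⟨m + k, show (g ^ (m + k)) x = (g ^ m) ((g ^ k) x) by
      rw [← Equiv.Perm.mul_apply, ← zpow_add]⟩
  · exact ⟨m - k, show (g ^ (m - k)) ((g ^ k) x) = (g ^ m) x by
      rw [← Equiv.Perm.mul_apply, ← zpow_add, sub_add_cancel]⟩

lemma zOrbit_image_zpow (g : Equiv.Perm X) (x : X) (k : ℤ) :
    ⇑(g ^ k) '' zOrbit g x = zOrbit g x := by
  ext y
  constructor
  · rintro ⟨_, ⟨m, rfl⟩, rfl⟩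
    exact ⟨k + m, by rw [← Equiv.Perm.mul_apply, ← zpow_add]⟩
  · rintro ⟨m, rfl⟩
    exact ⟨(g ^ (m - k)) x, ⟨m - k, rfl⟩,
      by rw [← Equiv.Perm.mul_apply, ← zpow_add, add_sub_cancel]⟩

section Top

variable [TopologicalSpace X]

/-- Image of a closure under a continuous `zpow` pair. -/
lemma image_closure_eq {g : Equiv.Perm X} (hc : ∀ k : ℤ, Continuous ⇑(g ^ k))
    (k : ℤ) (S : Set X) : ⇑(g ^ k) '' closure S = closure (⇑(g ^ k) '' S) := by
  refine subset_antisymm (image_closure_subset_closure_image (hc k)) ?_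
  have h2 : ⇑(g ^ (-k)) '' closure (⇑(g ^ k) '' S) ⊆ closure S := by
    refine (image_closure_subset_closure_image (hc (-k))).trans (closure_mono ?_)
    rintro _ ⟨_, ⟨s, hs, rfl⟩, rfl⟩
    simpa [← Equiv.Perm.mul_apply, ← zpow_add] using hs
  intro y hy
  have : (g ^ (-k)) y ∈ closure S := h2 ⟨y, hy, rfl⟩
  refine ⟨(g ^ (-k)) y, this, ?_⟩
  rw [← Equiv.Perm.mul_apply, ← zpow_add]
  simp

lemma image_closure_zOrbit {g : Equiv.Perm X} (hc : ∀ k : ℤ, Continuous ⇑(g ^ k))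
    (k : ℤ) (x : X) :
    ⇑(g ^ k) '' closure (zOrbit g x) = closure (zOrbit g x) := by
  rw [image_closure_eq hc, zOrbit_image_zpow]

lemma closure_zOrbit_subset {g : Equiv.Perm X} (hc : ∀ k : ℤ, Continuous ⇑(g ^ k))
    {x y : X} (h : y ∈ closure (zOrbit g x)) :
    closure (zOrbit g y) ⊆ closure (zOrbit g x) := by
  refine closure_minimal ?_ isClosed_closure
  rintro _ ⟨k, rfl⟩
  have : (g ^ k) y ∈ ⇑(g ^ k) '' closure (zOrbit g x) := ⟨y, h, rfl⟩
  rwa [image_closure_zOrbit hc] at this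

/-- Symmetry of the orbit-closure relation for an R-closed map. -/
lemma symm_of_rclosed {g : Equiv.Perm X} (hR : RClosed g) {x y : X}
    (h : y ∈ closure (zOrbit g x)) : x ∈ closure (zOrbit g y) := by
  have hsub : zOrbit g x ×ˢ ({x} : Set X) ⊆ {p : X × X | p.2 ∈ closure (zOrbit g p.1)} := by
    rintro ⟨a, b⟩ ⟨⟨k, rfl⟩, hb⟩
    have hb' : b = x := hb
    subst hb'
    exact subset_closure (by rw [zOrbit_zpow_apply]; exact mem_zOrbit_self _ _)
  have hcl : (y, x) ∈ closure (zOrbit g x ×ˢ ({x} : Set X)) := by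
    rw [closure_prod_eq]
    exact ⟨h, subset_closure rfl⟩
  exact (closure_minimal hsub hR) hcl

lemma closure_zOrbit_eq {g : Equiv.Perm X} (hc : ∀ k : ℤ, Continuous ⇑(g ^ k))
    (hR : RClosed g) {x y : X} (h : y ∈ closure (zOrbit g x)) :
    closure (zOrbit g y) = closure (zOrbit g x) :=
  subset_antisymm (closure_zOrbit_subset hc h)
    (closure_zOrbit_subset hc (symm_of_rclosed hR h))

/-- Existence of a minimal set inside a given orbit closure, in a compact space. -/
lemma exists_minimal {g : Equiv.Perm X} [CompactSpace X]
    (hc : ∀ k : ℤ, Continuous ⇑(g ^ k)) (x : X) :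
    ∃ M, M ⊆ closure (zOrbit g x) ∧ M.Nonempty ∧ IsClosed M ∧
      (∀ k : ℤ, ⇑(g ^ k) '' M ⊆ M) ∧ ∀ z ∈ M, closure (zOrbit g z) = M := by
  set S : Set (Set X) :=
    {A | A.Nonempty ∧ IsClosed A ∧ ∀ k : ℤ, ⇑(g ^ k) '' A ⊆ A} with hS
  have hxS : closure (zOrbit g x) ∈ S := by
    refine ⟨⟨x, subset_closure (mem_zOrbit_self g x)⟩, isClosed_closure, fun k => ?_⟩
    rw [image_closure_zOrbit hc]
  have H : ∀ c ⊆ S, IsChain (· ⊆ ·) c → c.Nonempty →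
      ∃ lb ∈ S, ∀ s ∈ c, lb ⊆ s := by
    intro c hcS hchain hcne
    refine ⟨⋂₀ c, ⟨?_, ?_, ?_⟩, fun s hs => sInter_subset_of_mem hs⟩
    · haveI : Nonempty c := hcne.to_subtype
      refine IsCompact.nonempty_sInter_of_directed_nonempty_isCompact_isClosed
        (fun a ha b hb => (hchain.total ha hb).elim
          (fun hab => ⟨a, ha, subset_rfl, hab⟩) (fun hba => ⟨b, hb, hba, subset_rfl⟩))
        (fun U hU => (hcS hU).1)
        (fun U hU => (hcS hU).2.1.isCompact) (fun U hU => (hcS hU).2.1)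
    · exact isClosed_sInter fun U hU => (hcS hU).2.1
    · intro k y hy
      rcases hy with ⟨m, hm, rfl⟩
      intro U hU
      exact (hcS hU).2.2 k ⟨m, hm U hU, rfl⟩
  obtain ⟨M, hMx, hMmin⟩ := zorn_superset_nonempty S H _ hxS
  obtain ⟨hMne, hMcl, hMinv⟩ := hMmin.prop
  refine ⟨M, hMx, hMne, hMcl, hMinv, fun z hz => ?_⟩
  have hsub : closure (zOrbit g z) ⊆ M := by
    refine closure_minimal ?_ hMcl
    rintro _ ⟨k, rfl⟩
    exact hMinv k ⟨z, hz, rfl⟩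
  have hmem : closure (zOrbit g z) ∈ S := by
    refine ⟨⟨z, subset_closure (mem_zOrbit_self g z)⟩, isClosed_closure, fun k => ?_⟩
    rw [image_closure_zOrbit hc]
  exact subset_antisymm hsub (hMmin.le_of_le hmem hsub)

/-- Natural powers of a homeomorphism as homeomorphisms. -/
def hpow (f : X ≃ₜ X) : ℕ → X ≃ₜ X
  | 0 => Homeomorph.refl X
  | (m + 1) => (hpow f m).trans f

lemma hpow_coe (f : X ≃ₜ X) (m : ℕ) : ⇑(hpow f m) = ⇑(f.toEquiv ^ m) := by
  induction m with
  | zero => funext x; simp [hpow]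
  | succ m ih => funext x; simp [hpow, pow_succ', Equiv.Perm.mul_apply, ih]

/-- Integer powers of a homeomorphism as homeomorphisms. -/
def hzpow (f : X ≃ₜ X) : ℤ → X ≃ₜ X
  | .ofNat m => hpow f m
  | .negSucc m => (hpow f (m + 1)).symm

lemma hzpow_coe (f : X ≃ₜ X) (k : ℤ) : ⇑(hzpow f k) = ⇑(f.toEquiv ^ k) := by
  cases k with
  | ofNat m =>
    show ⇑(hpow f m) = ⇑(f.toEquiv ^ (Int.ofNat m))
    rw [hpow_coe, show (Int.ofNat m) = (m : ℤ) from rfl, zpow_natCast]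
  | negSucc m =>
    have h : (hpow f (m + 1)).toEquiv = f.toEquiv ^ (m + 1) :=
      Equiv.ext fun x => congrFun (hpow_coe f (m + 1)) x
    show ⇑(hpow f (m + 1)).symm = ⇑(f.toEquiv ^ Int.negSucc m)
    rw [zpow_negSucc, ← h]
    rfl

lemma cont_zpow (f : X ≃ₜ X) (k : ℤ) : Continuous ⇑(f.toEquiv ^ k) := by
  rw [← hzpow_coe]; exact (hzpow f k).continuous

end Top

end RCAux

/-- If a homeomorphism `f` of a compact metrizable space is R-closed, then every positive
iterate `fⁿ` is pointwise almost periodic: the relation `y ∈ closure (O_{fⁿ}(x))` is an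
equivalence relation on `X`. -/
theorem pow_pointwise_almost_periodic_of_rclosed {X : Type*} [TopologicalSpace X]
    [CompactSpace X] [TopologicalSpace.MetrizableSpace X] (f : X ≃ₜ X)
    (hf : RClosed f.toEquiv) (n : ℕ) (hn : 0 < n) :
    Equivalence (fun x y : X => y ∈ closure (zOrbit (f.toEquiv ^ n) x)) := by
  classical
  set g : Equiv.Perm X := f.toEquiv ^ n with hg
  have hgk : ∀ k : ℤ, g ^ k = f.toEquiv ^ ((n : ℤ) * k) := fun k => by
    rw [hg, ← zpow_natCast, ← zpow_mul]
  have hcg : ∀ k : ℤ, Continuous ⇑(g ^ k) := fun k => by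
    rw [hgk]; exact RCAux.cont_zpow f _
  have hcf : ∀ k : ℤ, Continuous ⇑(f.toEquiv ^ k) := RCAux.cont_zpow f
  refine ⟨fun x => subset_closure (RCAux.mem_zOrbit_self g x), @fun x y h => ?_,
    @fun x y z hxy hyz => RCAux.closure_zOrbit_subset hcg hxy hyz⟩
  -- symmetry is the substantial part
  obtain ⟨M, hMC, hMne, hMcl, hMinv, hMz⟩ := RCAux.exists_minimal hcg x
  set K := closure (zOrbit f.toEquiv x) with hK
  have hCK : closure (zOrbit g x) ⊆ K := by
    refine closure_minimal ?_ isClosed_closure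
    rintro _ ⟨k, rfl⟩
    exact subset_closure ⟨(n : ℤ) * k,
      show (f.toEquiv ^ ((n : ℤ) * k)) x = (g ^ k) x by rw [← hgk]⟩
  have hcomm : ∀ (t k : ℤ) (w : X),
      (g ^ k) ((f.toEquiv ^ t) w) = (f.toEquiv ^ t) ((g ^ k) w) := by
    intro t k w
    rw [hgk, ← Equiv.Perm.mul_apply, ← Equiv.Perm.mul_apply, ← zpow_add, ← zpow_add,
      add_comm]
  have horb : ∀ (t : ℤ) (w : X),
      zOrbit g ((f.toEquiv ^ t) w) = ⇑(f.toEquiv ^ t) '' zOrbit g w := by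
    intro t w; ext u
    constructor
    · rintro ⟨k, rfl⟩; exact ⟨(g ^ k) w, ⟨k, rfl⟩, (hcomm t k w).symm⟩
    · rintro ⟨_, ⟨k, rfl⟩, rfl⟩; exact ⟨k, hcomm t k w⟩
  have hclorb : ∀ (t : ℤ) (w : X),
      closure (zOrbit g ((f.toEquiv ^ t) w)) = ⇑(f.toEquiv ^ t) '' closure (zOrbit g w) := by
    intro t w; rw [horb, RCAux.image_closure_eq hcf]
  set U : Set X := ⋃ j : Fin n, ⇑(f.toEquiv ^ (j : ℤ)) '' M with hU
  have hUclosed : IsClosed U := by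
    refine isClosed_iUnion_of_finite fun j => ?_
    exact ((hMcl.isCompact).image (hcf _)).isClosed
  have hMU : ∀ (t : ℤ), ∀ m ∈ M, (f.toEquiv ^ t) m ∈ U := by
    intro t m hm
    have hn' : (0 : ℤ) < n := by exact_mod_cast hn
    have hr0 : 0 ≤ t % (n : ℤ) := Int.emod_nonneg t (by omega)
    have hrn : t % (n : ℤ) < n := Int.emod_lt_of_pos t hn'
    refine Set.mem_iUnion.2 ⟨⟨(t % (n : ℤ)).toNat, by omega⟩, ?_⟩
    refine ⟨(g ^ (t / (n : ℤ))) m, hMinv _ ⟨m, hm, rfl⟩, ?_⟩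
    rw [hgk, ← Equiv.Perm.mul_apply, ← zpow_add]
    congr 1
    simp only [Fin.val_mk]
    rw [Int.toNat_of_nonneg hr0]
    rw [Int.emod_add_mul_ediv t n]
  obtain ⟨z, hz⟩ := hMne
  have hzK : z ∈ K := hCK (hMC hz)
  have hKz : closure (zOrbit f.toEquiv z) = K := RCAux.closure_zOrbit_eq hcf hf hzK
  have hKU : K ⊆ U := by
    rw [← hKz]
    refine closure_minimal ?_ hUclosed
    rintro _ ⟨k, rfl⟩
    exact hMU k z hz
  have hxU : x ∈ U := hKU (subset_closure (RCAux.mem_zOrbit_self _ _))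
  obtain ⟨j, hj⟩ := Set.mem_iUnion.1 hxU
  obtain ⟨m, hm, hme⟩ := hj
  have hCx : closure (zOrbit g x) = ⇑(f.toEquiv ^ (j : ℤ)) '' M := by
    rw [← hme, hclorb, hMz m hm]
  rw [hCx] at h
  obtain ⟨m', hm', hm'e⟩ := h
  rw [← hm'e, hclorb, hMz m' hm']
  exact ⟨m, hm, hme⟩
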